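/- Let N ≥ 4 be an even integer, τ ∈ ℍ, and set a_i := θ_i^{(N)}(0, τ) and θ_i(z) := θ_i^{(N)}(z, τ), with indices read modulo N. Then for every integer j and every z ∈ ℂ, the following four identities hold: (i) a_j²·θ_0(z)² + a_{N/2+j}²·θ_{N/2}(z)² = a_0²·θ_j(z)·θ_{N−j}(z) + a_{N/2}²·θ_{N/2+j}(z)·θ_{N/2−j}(z); (ii) a_0·a_{2j}·θ_0(z)² + a_{N/2}·a_{N/2+2j}·θ_{N/2}(z)² = a_j²·θ_j(z)·θ_{N−j}(z) + a_{N/2+j}²·θ_{N/2+j}(z)·θ_{N/2−j}(z); (iii) a_j·a_{j+1}·θ_0(z)·θ_1(z) + a_{N/2+j}·a_{N/2+j+1}·θ_{N/2}(z)·θ_{N/2+1}(z) = a_0·a_1·θ_{j+1}(z)·θ_{N−j}(z) + a_{N/2}·a_{N/2+1}·θ_{N/2+j+1}(z)·θ_{N/2−j}(z); (iv) a_0·a_{2j+1}·θ_0(z)·θ_1(z) + a_{N/2}·a_{N/2+2j+1}·θ_{N/2}(z)·θ_{N/2+1}(z) = a_j·a_{j+1}·θ_{j+1}(z)·θ_{N−j}(z)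 + a_{N/2+j}·a_{N/2+j+1}·θ_{N/2+j+1}(z)·θ_{N/2−j}(z). -/

import Mathlib

/-!
Writing `θ_i θ_k` as a double sum over `ℤ²` and splitting the lattice into the classes
`(a + b, a - b)` and `(a + b, a - b - 1)` gives the addition formula
`θ_i(z) θ_k(z) = Θ_{i+k}(z) P_{N+i-k} + Θ_{i+k+N}(z) P_{i-k}`, with `Θ = θ^{(2N)}`, theta
constants `P_m = thetaConst N τ m` at `2Nτ`, and all indices read modulo `2N`. For `N = 2t` the
product `θ_{t+i} θ_{t+k}` has the same expansion with the two `Θ`'s exchanged, so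
`a_i a_k θ_l θ_m + a_{t+i} a_{t+k} θ_{t+l} θ_{t+m}` depends only on the sums `i + k`, `l + m`
and is unchanged when the differences `i - k` and `l - m` are swapped. Each of the four
relations is one such swap, up to `a_{-i} = a_i` and `θ_{i+N} = θ_i`.
-/

open scoped UpperHalfPlane

/-- `e(x) = exp(2πix)`. -/
noncomputable def e (x : ℂ) : ℂ := Complex.exp (2 * Real.pi * Complex.I * x)

/-- The theta function with characteristic `(p, q)`:
`θ_{(p,q)}(z,τ) = ∑_{n ∈ ℤ} e((1/2)(n+p)²τ + (n+p)(z+q))`. -/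
noncomputable def jtheta (p q : ℝ) (z τ : ℂ) : ℂ :=
  ∑' n : ℤ, e ((1 / 2 : ℂ) * ((n : ℂ) + p) ^ 2 * τ + ((n : ℂ) + p) * (z + q))

/-- `θ_k^{(N)}(z,τ) = θ_{(1/2 - k/N, N/2)}(Nz, Nτ)`. -/
noncomputable def thetaN (N : ℕ) (k : ℝ) (z τ : ℂ) : ℂ :=
  jtheta (1 / 2 - k / N) (N / 2) (N * z) (N * τ)

/-- `θ_i^{(N)}(z,τ)` with integer index `i` (read modulo `N`). -/
noncomputable def thN (N : ℕ) (τ : ℍ) (i : ℤ) (z : ℂ) : ℂ := thetaN N (i : ℝ) z τ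

/-- The theta null values `a_i = θ_i^{(N)}(0,τ)` with integer index `i` (read modulo `N`). -/
noncomputable def aN (N : ℕ) (τ : ℍ) (i : ℤ) : ℂ := thetaN N (i : ℝ) 0 τ

lemma e_add (x y : ℂ) : e (x + y) = e x * e y := by
  rw [e, e, e, ← Complex.exp_add]
  ring_nf

lemma e_intCast (k : ℤ) : e k = 1 := by
  rw [e, show 2 * (Real.pi : ℂ) * Complex.I * k = k * (2 * Real.pi * Complex.I) by ring]
  exact Complex.exp_int_mul_two_pi_mul_I k

noncomputable def jthetaTerm (p q : ℝ) (z τ : ℂ) (n : ℤ) : ℂ :=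
  e ((1 / 2 : ℂ) * ((n : ℂ) + p) ^ 2 * τ + ((n : ℂ) + p) * (z + q))

lemma jtheta_eq_tsum (p q : ℝ) (z τ : ℂ) : jtheta p q z τ = ∑' n, jthetaTerm p q z τ n := rfl

lemma summable_norm_jthetaTerm (p q : ℝ) (z : ℂ) {τ : ℂ} (hτ : 0 < τ.im) :
    Summable (‖jthetaTerm p q z τ ·‖) := by
  have hterm : jthetaTerm p q z τ = fun n ↦ e ((1 / 2 : ℂ) * (p : ℂ) ^ 2 * τ + p * (z + q)) *
      jacobiTheta₂_term n (p * τ + z + q) τ := by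
    ext n
    rw [jthetaTerm, e, jacobiTheta₂_term, e, ← Complex.exp_add]
    ring_nf
  rw [summable_norm_iff, hterm]
  exact ((summable_jacobiTheta₂_term_iff _ _).mpr hτ).mul_left _

lemma jtheta_char_add_intCast (p q : ℝ) (z τ : ℂ) (c : ℤ) :
    jtheta (p + c) q z τ = jtheta p q z τ := by
  rw [jtheta_eq_tsum, jtheta_eq_tsum, ← (Equiv.addRight c).tsum_eq (jthetaTerm p q z τ)]
  refine tsum_congr fun n ↦ ?_
  simp only [jthetaTerm, Equiv.coe_addRight]
  push_cast
  ring_nf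

lemma jtheta_add_intCast (p q : ℝ) (z τ : ℂ) (s : ℤ) :
    jtheta p q (z + s) τ = e (p * s) * jtheta p q z τ := by
  rw [jtheta_eq_tsum, jtheta_eq_tsum, ← tsum_mul_left]
  refine tsum_congr fun n ↦ ?_
  rw [jthetaTerm, jthetaTerm, ← e_add, ← one_mul (e (p * s + _)), ← e_intCast (n * s), ← e_add]
  congr 1
  push_cast
  ring

lemma jtheta_neg_char (p q : ℝ) (z τ : ℂ) : jtheta (-p) q z τ = jtheta p q (-z - 2 * q) τ := by
  rw [jtheta_eq_tsum, jtheta_eq_tsum, ← (Equiv.neg ℤ).tsum_eq]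
  refine tsum_congr fun n ↦ ?_
  simp only [jthetaTerm, Equiv.neg_apply]
  push_cast
  ring_nf

lemma hasSum_jthetaTerm_mul_jthetaTerm (p p' q q' : ℝ) (z z' : ℂ) {τ : ℂ} (hτ : 0 < τ.im) :
    HasSum (fun mn : ℤ × ℤ ↦ jthetaTerm p q z τ mn.1 * jthetaTerm p' q' z' τ mn.2)
      (jtheta p q z τ * jtheta p' q' z' τ) := by
  have h := summable_norm_jthetaTerm p q z hτ
  have h' := summable_norm_jthetaTerm p' q' z' hτ
  rw [jtheta_eq_tsum, jtheta_eq_tsum, tsum_mul_tsum_of_summable_norm h h']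
  exact (summable_mul_of_summable_norm h h').hasSum

def sumDiffEquiv : (ℤ × ℤ) ⊕ (ℤ × ℤ) ≃ ℤ × ℤ where
  toFun := Sum.elim (fun ab ↦ (ab.1 + ab.2, ab.1 - ab.2)) (fun ab ↦ (ab.1 + ab.2, ab.1 - ab.2 - 1))
  invFun mn := if (mn.1 + mn.2) % 2 = 0 then .inl ((mn.1 + mn.2) / 2, (mn.1 - mn.2) / 2)
    else .inr ((mn.1 + mn.2 + 1) / 2, (mn.1 - mn.2 - 1) / 2)
  left_inv := by
    rintro (⟨a, b⟩ | ⟨a, b⟩) <;> dsimp only [Sum.elim_inl, Sum.elim_inr] <;> split_ifs <;>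
      first | omega | (simp only [Sum.inl.injEq, Sum.inr.injEq, Prod.mk.injEq]; omega)
  right_inv := by
    rintro ⟨m, n⟩
    dsimp only
    split_ifs <;> simp only [Sum.elim_inl, Sum.elim_inr, Prod.mk.injEq] <;> omega

lemma sumDiffEquiv_inl (a b : ℤ) : sumDiffEquiv (.inl (a, b)) = (a + b, a - b) := rfl

lemma sumDiffEquiv_inr (a b : ℤ) : sumDiffEquiv (.inr (a, b)) = (a + b, a - b - 1) := rfl

lemma jthetaTerm_mul_jthetaTerm {p p' P Q q : ℝ} {z z' τ : ℂ} {m n a b : ℤ}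
    (hm : (m : ℂ) + p = (a + P) + (b + Q)) (hn : (n : ℂ) + p' = (a + P) - (b + Q)) :
    jthetaTerm p q z τ m * jthetaTerm p' q z' τ n =
      jthetaTerm P (2 * q) (z + z') (2 * τ) a * jthetaTerm Q 0 (z - z') (2 * τ) b := by
  rw [jthetaTerm, jthetaTerm, hm, hn, ← e_add, jthetaTerm, jthetaTerm, ← e_add]
  push_cast
  ring_nf

theorem jtheta_mul_jtheta (p p' q : ℝ) (z z' : ℂ) {τ : ℂ} (hτ : 0 < τ.im) :
    jtheta p q z τ * jtheta p' q z' τ =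
      jtheta ((p + p') / 2) (2 * q) (z + z') (2 * τ) * jtheta ((p - p') / 2) 0 (z - z') (2 * τ)
      + jtheta ((p + p') / 2 - 1 / 2) (2 * q) (z + z') (2 * τ) *
        jtheta ((p - p') / 2 + 1 / 2) 0 (z - z') (2 * τ) := by
  have h2τ : 0 < (2 * τ).im := by simpa using hτ
  refine (sumDiffEquiv.hasSum_iff.mpr (hasSum_jthetaTerm_mul_jthetaTerm p p' q q z z' hτ)).unique
    (HasSum.sum ?_ ?_)
  · convert hasSum_jthetaTerm_mul_jthetaTerm _ _ _ _ _ _ h2τ using 2 with ⟨a, b⟩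
    simp only [Function.comp_apply, sumDiffEquiv_inl]
    refine jthetaTerm_mul_jthetaTerm ?_ ?_ <;> push_cast <;> ring
  · convert hasSum_jthetaTerm_mul_jthetaTerm _ _ _ _ _ _ h2τ using 2 with ⟨a, b⟩
    simp only [Function.comp_apply, sumDiffEquiv_inr]
    refine jthetaTerm_mul_jthetaTerm ?_ ?_ <;> push_cast <;> ring

noncomputable def thetaConst (N : ℕ) (τ : ℍ) (m : ℤ) : ℂ :=
  jtheta (1 / 2 - m / (2 * N)) 0 0 (2 * N * τ)

section Level

variable {N : ℕ} {τ : ℍ}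

lemma thN_apply_zero (i : ℤ) : thN N τ i 0 = aN N τ i := rfl

lemma thN_congr (hN : N ≠ 0) {i i' : ℤ} (h : i ≡ i' [ZMOD N]) (z : ℂ) :
    thN N τ i z = thN N τ i' z := by
  obtain ⟨c, hc⟩ := Int.modEq_iff_dvd.mp h
  have hN' : (N : ℝ) ≠ 0 := by exact_mod_cast hN
  rw [thN, thN, thetaN, thetaN, ← jtheta_char_add_intCast _ _ _ _ (-c)]
  congr 1
  rw [show (i' : ℝ) = i + N * c by exact_mod_cast (by omega : i' = i + N * c)]
  field_simp
  push_cast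
  ring

lemma thN_natCast_sub (hN : N ≠ 0) (i : ℤ) (z : ℂ) : thN N τ (N - i) z = thN N τ (-i) z :=
  thN_congr hN (Int.modEq_iff_dvd.mpr ⟨-1, by ring⟩) z

lemma aN_neg (hN : N ≠ 0) (heven : Even N) (i : ℤ) : aN N τ (-i) = aN N τ i := by
  obtain ⟨r, hr⟩ := heven
  have hN' : (N : ℝ) ≠ 0 := by exact_mod_cast hN
  simp only [aN, thetaN, mul_zero]
  rw [← neg_neg (1 / 2 - (i : ℝ) / N), jtheta_neg_char,
    show -0 - 2 * ((N / 2 : ℝ) : ℂ) = 0 + ((-N : ℤ) : ℂ) by push_cast; ring, jtheta_add_intCast,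
    -- the shift by `-N` costs `e(N/2 - i)`, which is `1` because `N` is even
    show ((-(1 / 2 - (i : ℝ) / N) : ℝ) : ℂ) * ((-N : ℤ) : ℂ) = ((r - i : ℤ) : ℂ) by
      push_cast; field_simp; rw [hr]; push_cast; ring,
    e_intCast, one_mul, ← jtheta_char_add_intCast _ _ _ _ (-1)]
  congr 1
  push_cast
  ring

lemma aN_half_sub (hN : N ≠ 0) {t : ℤ} (ht : (N : ℤ) = 2 * t) (i : ℤ) :
    aN N τ (t - i) = aN N τ (t + i) := by
  rw [← aN_neg hN ⟨t.toNat, by omega⟩]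
  exact thN_congr hN (Int.modEq_iff_dvd.mpr ⟨1, by omega⟩) 0

lemma thN_mul_thN (hN : N ≠ 0) (i k : ℤ) (x : ℂ) :
    thN N τ i x * thN N τ k x =
      thN (2 * N) τ (i + k) x * thetaConst N τ (N + (i - k))
      + thN (2 * N) τ (i + k + N) x * thetaConst N τ (i - k) := by
  have hN' : (N : ℝ) ≠ 0 := by exact_mod_cast hN
  have hτ : 0 < ((N : ℂ) * τ).im := by
    simpa using mul_pos (Nat.cast_pos.mpr (Nat.pos_of_ne_zero hN)) τ.im_pos
  simp only [thN, thetaN, thetaConst]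
  rw [jtheta_mul_jtheta _ _ _ _ _ hτ]
  congr 3 <;> push_cast <;> field_simp <;> ring

lemma thN_add_mul_thN_add (hN : N ≠ 0) {t : ℤ} (ht : (N : ℤ) = 2 * t) (i k : ℤ) (x : ℂ) :
    thN N τ (t + i) x * thN N τ (t + k) x =
      thN (2 * N) τ (i + k + N) x * thetaConst N τ (N + (i - k))
      + thN (2 * N) τ (i + k) x * thetaConst N τ (i - k) := by
  have hperiod : thN (2 * N) τ (i + k + N + N) x = thN (2 * N) τ (i + k) x :=
    thN_congr (by positivity) (Int.modEq_iff_dvd.mpr ⟨-1, by push_cast; ring⟩) x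
  rw [thN_mul_thN hN, show t + i + (t + k) = i + k + N by omega,
    show t + i - (t + k) = i - k by ring, hperiod]

theorem thN_riemann_relation (hN : N ≠ 0) {t : ℤ} (ht : (N : ℤ) = 2 * t)
    (i k l m i' k' l' m' : ℤ) (hs : i' + k' = i + k) (hs' : l' + m' = l + m)
    (hd : i' - k' = l - m) (hd' : l' - m' = i - k) (w z : ℂ) :
    thN N τ i w * thN N τ k w * (thN N τ l z * thN N τ m z)
      + thN N τ (t + i) w * thN N τ (t + k) w * (thN N τ (t + l) z * thN N τ (t + m) z) =
    thN N τ i' w * thN N τ k' w * (thN N τ l' z * thN N τ m' z)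
      + thN N τ (t + i') w * thN N τ (t + k') w * (thN N τ (t + l') z * thN N τ (t + m') z) := by
  simp only [thN_add_mul_thN_add hN ht]
  simp only [thN_mul_thN hN, hs, hs', hd, hd']
  ring

end Level

/-- Equations (7.15) and (7.16): the quadratic relations satisfied by the `θ_i^{(N)}`
for even `N`. -/
theorem quadratic_relations_even (N : ℕ) (hN : 4 ≤ N) (heven : Even N) (τ : ℍ)
    (j : ℤ) (z : ℂ) :
    (aN N τ j ^ 2 * thN N τ 0 z ^ 2 + aN N τ ((N : ℤ) / 2 + j) ^ 2 * thN N τ ((N : ℤ) / 2) z ^ 2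
      = aN N τ 0 ^ 2 * thN N τ j z * thN N τ ((N : ℤ) - j) z
        + aN N τ ((N : ℤ) / 2) ^ 2 * thN N τ ((N : ℤ) / 2 + j) z * thN N τ ((N : ℤ) / 2 - j) z) ∧
    (aN N τ 0 * aN N τ (2 * j) * thN N τ 0 z ^ 2
        + aN N τ ((N : ℤ) / 2) * aN N τ ((N : ℤ) / 2 + 2 * j) * thN N τ ((N : ℤ) / 2) z ^ 2
      = aN N τ j ^ 2 * thN N τ j z * thN N τ ((N : ℤ) - j) z
        + aN N τ ((N : ℤ) / 2 + j) ^ 2 * thN N τ ((N : ℤ) / 2 + j) z * thN N τ ((N : ℤ) / 2 - j) z) ∧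
    (aN N τ j * aN N τ (j + 1) * thN N τ 0 z * thN N τ 1 z
        + aN N τ ((N : ℤ) / 2 + j) * aN N τ ((N : ℤ) / 2 + j + 1) *
            thN N τ ((N : ℤ) / 2) z * thN N τ ((N : ℤ) / 2 + 1) z
      = aN N τ 0 * aN N τ 1 * thN N τ (j + 1) z * thN N τ ((N : ℤ) - j) z
        + aN N τ ((N : ℤ) / 2) * aN N τ ((N : ℤ) / 2 + 1) *
            thN N τ ((N : ℤ) / 2 + j + 1) z * thN N τ ((N : ℤ) / 2 - j) z) ∧
    (aN N τ 0 * aN N τ (2 * j + 1) * thN N τ 0 z * thN N τ 1 z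
        + aN N τ ((N : ℤ) / 2) * aN N τ ((N : ℤ) / 2 + 2 * j + 1) *
            thN N τ ((N : ℤ) / 2) z * thN N τ ((N : ℤ) / 2 + 1) z
      = aN N τ j * aN N τ (j + 1) * thN N τ (j + 1) z * thN N τ ((N : ℤ) - j) z
        + aN N τ ((N : ℤ) / 2 + j) * aN N τ ((N : ℤ) / 2 + j + 1) *
            thN N τ ((N : ℤ) / 2 + j + 1) z * thN N τ ((N : ℤ) / 2 - j) z) := by
  have hN0 : N ≠ 0 := by omega
  obtain ⟨t, ht⟩ : ∃ t : ℤ, (N : ℤ) = 2 * t := ⟨N / 2, by obtain ⟨r, hr⟩ := heven; omega⟩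
  rw [show (N : ℤ) / 2 = t by omega, thN_natCast_sub hN0]
  have h₁ := thN_riemann_relation (τ := τ) hN0 ht j (-j) 0 0 0 0 j (-j)
    (by ring) (by ring) (by ring) (by ring) 0 z
  have h₂ := thN_riemann_relation (τ := τ) hN0 ht 0 (2 * j) 0 0 j j (-j) j
    (by ring) (by ring) (by ring) (by ring) 0 z
  have h₃ := thN_riemann_relation (τ := τ) hN0 ht j (-(j + 1)) 0 1 (-1) 0 (j + 1) (-j)
    (by ring) (by ring) (by ring) (by ring) 0 z
  have h₄ := thN_riemann_relation (τ := τ) hN0 ht 0 (2 * j + 1) 0 1 j (j + 1) (-j) (j + 1)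
    (by ring) (by ring) (by ring) (by ring) 0 z
  simp only [thN_apply_zero, add_zero, ← sub_eq_add_neg, ← add_assoc, aN_neg hN0 heven,
    aN_half_sub hN0 ht] at h₁ h₂ h₃ h₄
  exact ⟨by linear_combination h₁, by linear_combination h₂, by linear_combination h₃,
    by linear_combination h₄⟩
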